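/- arXiv:0707.4207 — 5 statements merged into one kernel-verified Lean document; each statement's English description precedes it below -/
import Mathlib

section
/- With F_n as defined by the contour integral, for all integers n, x, t one has F_n(x,t+1) = F_n(x,t) + (1−q)·F_{n−1}(x−1,t). -/
open Complex

/-- `Fker q m x t` is `F_m(x,t) = (1/2πi) ∮ dw w^{-m} (1+w)^{m-x-1} (1+(1-q)w)^t`,
with the contour a circle around 0 of radius in (1, 1/(1-q)), enclosing 0 and -1
but not the pole at -1/(1-q). -/
noncomputable def Fker (q : ℝ) (m x t : ℤ) : ℂ :=
  (2 * Real.pi * Complex.I)⁻¹ *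
    ∮ w in C(0, (1 + (1 - q)⁻¹) / 2),
      w ^ (-m) * (1 + w) ^ (m - x - 1) * (1 + (1 - (q : ℂ)) * w) ^ t

/-! Multiplying the integrand by `1 + c w = 1 + (1 - q) w` splits it into the integrand itself and
`c` times the integrand of `F_{m-1}(x-1, t)`, since `w · w^{-m} = w^{-(m-1)}` and the exponent
`m - x - 1` of `1 + w` is unchanged by the shift `(m, x) ↦ (m - 1, x - 1)`. Both contour integrals
exist because the circle of `Fker` avoids the three singular points `0`, `-1` and `-1/(1-q)`. -/

namespace Fker

open Metric

noncomputable def integrand (c : ℂ) (m x t : ℤ) (w : ℂ) : ℂ :=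
  w ^ (-m) * (1 + w) ^ (m - x - 1) * (1 + c * w) ^ t

theorem integrand_time_succ (c : ℂ) (m x t : ℤ) {w : ℂ} (hw : w ≠ 0) (hcw : 1 + c * w ≠ 0) :
    integrand c m x (t + 1) w = integrand c m x t w + c * integrand c (m - 1) (x - 1) t w := by
  have hexp : m - 1 - (x - 1) - 1 = m - x - 1 := by ring
  have hneg : -(m - 1) = -m + 1 := by ring
  simp only [integrand, hexp, hneg, zpow_add_one₀ hw, zpow_add_one₀ hcw]
  ring

theorem integrand_factors_ne_zero {c : ℂ} {R : ℝ} (hR0 : 0 < R) (hR1 : R ≠ 1) (hcR : ‖c‖ * R ≠ 1)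
    {w : ℂ} (hw : w ∈ sphere (0 : ℂ) R) : w ≠ 0 ∧ 1 + w ≠ 0 ∧ 1 + c * w ≠ 0 := by
  rw [mem_sphere_zero_iff_norm] at hw
  refine ⟨?_, fun h => hR1 ?_, fun h => hcR ?_⟩
  · rw [← norm_ne_zero_iff, hw]
    exact hR0.ne'
  · rw [← hw, eq_neg_of_add_eq_zero_right h, norm_neg, norm_one]
  · rw [← hw, ← norm_mul, eq_neg_of_add_eq_zero_right h, norm_neg, norm_one]

theorem continuousOn_integrand (c : ℂ) (m x t : ℤ) {s : Set ℂ}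
    (hs : ∀ w ∈ s, w ≠ 0 ∧ 1 + w ≠ 0 ∧ 1 + c * w ≠ 0) : ContinuousOn (integrand c m x t) s :=
  ((continuousOn_id.zpow₀ _ fun w hw => .inl (hs w hw).1).mul
    ((continuousOn_const.add continuousOn_id).zpow₀ _ fun w hw => .inl (hs w hw).2.1)).mul
    ((continuousOn_const.add (continuousOn_const.mul continuousOn_id)).zpow₀ _
      fun w hw => .inl (hs w hw).2.2)

theorem circleIntegral_integrand_time_succ (c : ℂ) (m x t : ℤ) {R : ℝ} (hR0 : 0 < R)
    (hR1 : R ≠ 1) (hcR : ‖c‖ * R ≠ 1) :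
    ∮ w in C(0, R), integrand c m x (t + 1) w =
      (∮ w in C(0, R), integrand c m x t w) +
        c * ∮ w in C(0, R), integrand c (m - 1) (x - 1) t w := by
  have hs : ∀ w ∈ sphere (0 : ℂ) R, w ≠ 0 ∧ 1 + w ≠ 0 ∧ 1 + c * w ≠ 0 :=
    fun _ => integrand_factors_ne_zero hR0 hR1 hcR
  have hcont := fun m x t => continuousOn_integrand c m x t hs
  rw [← circleIntegral.integral_const_mul,
    ← circleIntegral.integral_add ((hcont m x t).circleIntegrable hR0.le)
      ((continuousOn_const.mul (hcont (m - 1) (x - 1) t)).circleIntegrable hR0.le (f := fun w => c * _))]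
  exact circleIntegral.integral_congr hR0.le fun w hw =>
    integrand_time_succ c m x t (hs w hw).1 (hs w hw).2.2

theorem eq_circleIntegral (q : ℝ) (m x t : ℤ) :
    Fker q m x t = (2 * Real.pi * I)⁻¹ *
      ∮ w in C(0, (1 + (1 - q)⁻¹) / 2), integrand (1 - q) m x t w :=
  rfl

end Fker

theorem F_time_recursion_shift (q : ℝ) (hq0 : 0 < q) (hq1 : q < 1) (n x t : ℤ) :
    Fker q n x (t + 1) = Fker q n x t + (1 - (q : ℂ)) * Fker q (n - 1) (x - 1) t := by
  have hc : ‖1 - (q : ℂ)‖ = 1 - q := by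
    rw [← ofReal_one, ← ofReal_sub, norm_real, Real.norm_of_nonneg (by linarith)]
  have hinv : 1 < (1 - q)⁻¹ := (one_lt_inv₀ (by linarith)).mpr (by linarith)
  have hcR : ‖1 - (q : ℂ)‖ * ((1 + (1 - q)⁻¹) / 2) = 1 - q / 2 := by
    rw [hc]
    field_simp [(by linarith : (1 - q) ≠ 0)]
    ring
  simp only [Fker.eq_circleIntegral]
  rw [Fker.circleIntegral_integrand_time_succ _ _ _ _ (by linarith) (by linarith)
    (by rw [hcR]; linarith)]
  ring
end

section
/- With F_n defined by the contour integral, for integers n > 0 and x > n, one has F_n(x, n) = 0. -/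
open Complex

/-!
Since `n > 0`, the factor `(1 + (1 - q) w) ^ n` is a polynomial, so the only singularities of the
integrand are `0` and `-1`, both inside the contour, which may therefore be pushed to infinity.
There the integrand is `O(|w| ^ (n - x - 1))` with `n - x - 1 ≤ -2`, so the integrals over large
circles tend to `0`.
-/

open Filter Metric Topology Bornology

theorem circleIntegral_eq_zero_of_tendsto_smul_cobounded {E : Type*} [NormedAddCommGroup E]
    [NormedSpace ℂ E] [CompleteSpace E] {f : ℂ → E} {r : ℝ} (hr : 0 < r)
    (hf : ∀ z : ℂ, r ≤ ‖z‖ → DifferentiableAt ℂ f z)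
    (hlim : Tendsto (fun z => z • f z) (cobounded ℂ) (𝓝 0)) :
    (∮ z in C(0, r), f z) = 0 := by
  have hconst : ∀ R, r ≤ R → (∮ z in C(0, R), f z) = ∮ z in C(0, r), f z := fun R hR =>
    circleIntegral_eq_of_differentiable_on_annulus_off_countable hr hR Set.countable_empty
      (fun z hz => (hf z (by simpa using hz.2)).continuousAt.continuousWithinAt)
      (fun z hz => hf z (le_of_lt (by simpa using hz.1.2)))
  have hsmall : ∀ ε > 0, ‖∮ z in C(0, r), f z‖ ≤ 2 * Real.pi * ε := by
    intro ε hε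
    obtain ⟨R₀, -, hR₀⟩ :=
      hasBasis_cobounded_norm.tendsto_left_iff.mp hlim _ (closedBall_mem_nhds 0 hε)
    set R := max r R₀
    have hR : 0 < R := lt_max_of_lt_left hr
    have hbound : ∀ z ∈ sphere (0 : ℂ) R, ‖f z‖ ≤ ε / R := by
      intro z hz
      rw [mem_sphere_zero_iff_norm] at hz
      have hzf : ‖z • f z‖ ≤ ε := by
        simpa using hR₀ (show R₀ ≤ ‖z‖ from hz ▸ le_max_right r R₀)
      rw [norm_smul, hz] at hzf
      rwa [le_div_iff₀ hR, mul_comm]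
    calc ‖∮ z in C(0, r), f z‖ = ‖∮ z in C(0, R), f z‖ := by
          rw [hconst R (le_max_left r R₀)]
      _ ≤ 2 * Real.pi * R * (ε / R) :=
          circleIntegral.norm_integral_le_of_norm_le_const hR.le hbound
      _ = 2 * Real.pi * ε := by field_simp
  refine norm_le_zero_iff.mp (le_of_forall_gt_imp_ge_of_dense fun δ hδ => ?_)
  calc ‖∮ z in C(0, r), f z‖ ≤ 2 * Real.pi * (δ / (2 * Real.pi)) := hsmall _ (by positivity)
    _ = δ := by field_simp

noncomputable def FkerIntegrand (q : ℝ) (m x t : ℤ) (w : ℂ) : ℂ :=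
  w ^ (-m) * (1 + w) ^ (m - x - 1) * (1 + (1 - (q : ℂ)) * w) ^ t

theorem Fker_eq (q : ℝ) (m x t : ℤ) :
    Fker q m x t =
      (2 * Real.pi * I)⁻¹ * ∮ w in C(0, (1 + (1 - q)⁻¹) / 2), FkerIntegrand q m x t w :=
  rfl

theorem differentiableAt_FkerIntegrand (q : ℝ) (m x : ℤ) {t : ℤ} (ht : 0 ≤ t) {w : ℂ}
    (hw₀ : w ≠ 0) (hw₁ : w ≠ -1) : DifferentiableAt ℂ (FkerIntegrand q m x t) w := by
  have h1w : 1 + w ≠ 0 := fun h => hw₁ (by linear_combination h)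
  unfold FkerIntegrand
  fun_prop (disch := first | exact Or.inl hw₀ | exact Or.inl h1w | exact Or.inr ht)

theorem mul_FkerIntegrand_eq_inv (q : ℝ) (m x t : ℤ) {w : ℂ} (hw₀ : w ≠ 0) :
    w * FkerIntegrand q m x t w =
      w⁻¹ ^ (x - t) * (1 + w⁻¹) ^ (m - x - 1) * (w⁻¹ + (1 - (q : ℂ))) ^ t := by
  have h₁ : 1 + w⁻¹ = (1 + w) * w⁻¹ := by field_simp; ring
  have h₂ : w⁻¹ + (1 - (q : ℂ)) = (1 + (1 - (q : ℂ)) * w) * w⁻¹ := by field_simp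
  have hpow : w * w ^ (-m) = w⁻¹ ^ (x - t) * w⁻¹ ^ (m - x - 1) * w⁻¹ ^ t := by
    rw [← zpow_add₀ (inv_ne_zero hw₀), ← zpow_add₀ (inv_ne_zero hw₀), inv_zpow',
      ← zpow_one_add₀ hw₀]
    ring_nf
  rw [FkerIntegrand, h₁, h₂, mul_zpow, mul_zpow]
  linear_combination (1 + w) ^ (m - x - 1) * (1 + (1 - (q : ℂ)) * w) ^ t * hpow

theorem tendsto_smul_FkerIntegrand_cobounded (q : ℝ) (m : ℤ) {x t : ℤ} (ht : 0 ≤ t)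
    (htx : t < x) : Tendsto (fun w => w • FkerIntegrand q m x t w) (cobounded ℂ) (𝓝 0) := by
  set g : ℂ → ℂ := fun u => u ^ (x - t) * (1 + u) ^ (m - x - 1) * (u + (1 - (q : ℂ))) ^ t
  have hg : ContinuousAt g 0 := by
    have h10 : (1 : ℂ) + 0 ≠ 0 := by norm_num
    fun_prop (disch := first | exact Or.inr (by omega) | exact Or.inl h10 | exact Or.inr ht)
  have hg0 : g 0 = 0 := by simp [g, zero_zpow _ (by omega : x - t ≠ 0)]
  have hcomp : Tendsto (fun w : ℂ => g w⁻¹) (cobounded ℂ) (𝓝 0) :=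
    hg0 ▸ hg.tendsto.comp tendsto_inv₀_cobounded
  refine hcomp.congr' ?_
  filter_upwards [eventually_cobounded_le_norm 1] with w hw
  exact (mul_FkerIntegrand_eq_inv q m x t (norm_pos_iff.mp (one_pos.trans_le hw))).symm

theorem F_pos_vanishes (q : ℝ) (hq0 : 0 < q) (hq1 : q < 1) (n x : ℤ) (hn : 0 < n)
    (hx : n < x) : Fker q n x n = 0 := by
  have hr : 1 < (1 + (1 - q)⁻¹) / 2 := by
    have : 1 < (1 - q)⁻¹ := (one_lt_inv₀ (by linarith)).mpr (by linarith)
    linarith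
  set r : ℝ := (1 + (1 - q)⁻¹) / 2
  have hdiff : ∀ w : ℂ, r ≤ ‖w‖ → DifferentiableAt ℂ (FkerIntegrand q n x n) w := by
    intro w hw
    refine differentiableAt_FkerIntegrand q n x hn.le ?_ ?_ <;>
    · rintro rfl
      norm_num at hw
      linarith
  rw [Fker_eq, circleIntegral_eq_zero_of_tendsto_smul_cobounded (by linarith) hdiff
    (tendsto_smul_FkerIntegrand_cobounded q n hn.le hx), mul_zero]
end

section
/- For n ≥ 1 let D_n = det[F_{j−i}(j−i, j−i)]_{1≤i,j≤n}, where F_k(k,k) = (1−q)^k for k ≥ 0 and F_{−k}(−k,−k) = (−q)^{−k} for k ≥ 0. Then D_n = q^{1−n}. -/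
/-- The diagonal value `F_m(m,m)`: `(1-q)^m` for `m ≥ 0` and `(-q)^m` for `m < 0`
(equivalently `F_{-k}(-k,-k) = (-1/q)^k`). -/
noncomputable def Fdiag (q : ℝ) (m : ℤ) : ℝ :=
  if 0 ≤ m then (1 - q) ^ m else (-q) ^ m

lemma Fdiag_of_nonneg (q : ℝ) {m : ℤ} (h : 0 ≤ m) : Fdiag q m = (1 - q) ^ m := by
  simp [Fdiag, h]

lemma Fdiag_of_nonpos (q : ℝ) {m : ℤ} (h : m ≤ 0) : Fdiag q m = (-q) ^ m := by
  rcases eq_or_lt_of_le h with h | h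
  · subst h; simp [Fdiag]
  · simp [Fdiag, not_le.2 h]

theorem det_Fdiag (q : ℝ) (hq0 : 0 < q) (hq1 : q < 1) (n : ℕ) (hn : 1 ≤ n) :
    (Matrix.of fun i j : Fin n => Fdiag q ((j : ℤ) - (i : ℤ))).det = q ^ (1 - (n : ℤ)) := by
  obtain ⟨m, rfl⟩ : ∃ m, n = m + 1 := ⟨n - 1, (Nat.succ_pred_eq_of_pos hn).symm⟩
  set n := m + 1 with hn'
  have hq : q ≠ 0 := ne_of_gt hq0
  have h1q : (1 : ℝ) - q ≠ 0 := by linarith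
  set M : Matrix (Fin n) (Fin n) ℝ :=
    Matrix.of fun i j : Fin n => Fdiag q ((j : ℤ) - (i : ℤ)) with hM
  set V : Matrix (Fin n) (Fin n) ℝ :=
    Matrix.of (fun j k : Fin n => if j = k then 1 else if (j : ℕ) + 1 = (k : ℕ) then -(1 - q) else 0)
    with hV
  set L : Matrix (Fin n) (Fin n) ℝ :=
    Matrix.of (fun i k : Fin n =>
      if (i : ℕ) < (k : ℕ) then 0
      else Fdiag q ((k : ℤ) - (i : ℤ)) * (if (k : ℕ) = 0 then 1 else q⁻¹)) with hL
  have hMV : M * V = L := by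
    ext i k
    rw [Matrix.mul_apply]
    have hsplit : ∀ j : Fin n, M i j * V j k =
        (if j = k then M i k else 0) +
        (if (j : ℕ) + 1 = (k : ℕ) then M i j * -(1 - q) else 0) := by
      intro j
      by_cases h1 : j = k
      · subst h1
        simp [hV]
      · by_cases h2 : (j : ℕ) + 1 = (k : ℕ)
        · simp [hV, h1, h2]
        · simp [hV, h1, h2]
    rw [Finset.sum_congr rfl (fun j _ => hsplit j), Finset.sum_add_distrib,
      Finset.sum_ite_eq' Finset.univ k (fun _ => M i k)]
    simp only [Finset.mem_univ, if_true]
    -- evaluate the second sum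
    have hsum2 : (∑ j : Fin n, if (j : ℕ) + 1 = (k : ℕ) then M i j * -(1 - q) else 0) =
        if 1 ≤ (k : ℕ) then M i ⟨(k : ℕ) - 1, by omega⟩ * -(1 - q) else 0 := by
      by_cases hk : 1 ≤ (k : ℕ)
      · rw [if_pos hk]
        rw [Finset.sum_eq_single (⟨(k : ℕ) - 1, by omega⟩ : Fin n)]
        · simp [show ((k : ℕ) - 1) + 1 = (k : ℕ) by omega]
        · intro j _ hj
          have : ¬ ((j : ℕ) + 1 = (k : ℕ)) := by
            intro h
            apply hj
            apply Fin.ext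
            simp; omega
          simp [this]
        · simp
      · rw [if_neg hk]
        apply Finset.sum_eq_zero
        intro j _
        have : ¬ ((j : ℕ) + 1 = (k : ℕ)) := by omega
        simp [this]
    rw [hsum2]
    -- now case analysis
    simp only [hM, hL, Matrix.of_apply]
    by_cases hk0 : (k : ℕ) = 0
    · have : ¬ ((i : ℕ) < (k : ℕ)) := by omega
      simp [hk0, this]
    · have hk1 : 1 ≤ (k : ℕ) := by omega
      rw [if_pos hk1, if_neg hk0]
      have hcast : ((⟨(k : ℕ) - 1, by omega⟩ : Fin n) : ℤ) = (k : ℤ) - 1 := by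
        simp; omega
      rw [hcast]
      by_cases hik : (i : ℕ) < (k : ℕ)
      · rw [if_pos hik]
        have h1 : (0 : ℤ) ≤ (k : ℤ) - (i : ℤ) := by omega
        have h2 : (0 : ℤ) ≤ (k : ℤ) - 1 - (i : ℤ) := by omega
        rw [Fdiag_of_nonneg q h1, Fdiag_of_nonneg q h2]
        have : (k : ℤ) - (i : ℤ) = ((k : ℤ) - 1 - (i : ℤ)) + 1 := by ring
        rw [this, zpow_add_one₀ h1q]
        ring
      · rw [if_neg hik]
        have h1 : (k : ℤ) - (i : ℤ) ≤ 0 := by omega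
        have h2 : (k : ℤ) - 1 - (i : ℤ) ≤ 0 := by omega
        rw [Fdiag_of_nonpos q h1, Fdiag_of_nonpos q h2]
        have : (k : ℤ) - 1 - (i : ℤ) = ((k : ℤ) - (i : ℤ)) + (-1) := by ring
        rw [this, zpow_add₀ (neg_ne_zero.mpr hq), zpow_neg_one]
        have key : -(1 - q) * (-q)⁻¹ = q⁻¹ - 1 := by
          rw [inv_neg]; field_simp
        linear_combination ((-q) ^ ((k : ℤ) - (i : ℤ))) * key
  have hdetV : V.det = 1 := by
    rw [Matrix.det_of_upperTriangular (by
      intro j k h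
      have h' : (k : ℕ) < (j : ℕ) := h
      have h1 : j ≠ k := by intro e; subst e; omega
      have h2 : ¬ ((j : ℕ) + 1 = (k : ℕ)) := by omega
      simp [hV, h1, h2])]
    apply Finset.prod_eq_one
    intro k _
    simp [hV]
  have hblockL : L.BlockTriangular OrderDual.toDual := by
    intro i k h
    have h' : (i : ℕ) < (k : ℕ) := h
    simp only [hL, Matrix.of_apply, if_pos h']
  have hdetL : L.det = q ^ (1 - (n : ℤ)) := by
    rw [Matrix.det_of_lowerTriangular L hblockL]
    have hdiag : ∀ i : Fin n, L i i = if (i : ℕ) = 0 then 1 else q⁻¹ := by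
      intro i
      have : Fdiag q ((i : ℤ) - (i : ℤ)) = 1 := by
        rw [show (i : ℤ) - (i : ℤ) = 0 by ring]; simp [Fdiag]
      rw [hL]
      simp only [Matrix.of_apply]
      rw [if_neg (lt_irrefl _), show (i : ℤ) - (i : ℤ) = 0 by ring]
      simp [Fdiag]
    rw [Finset.prod_congr rfl (fun i _ => hdiag i)]
    rw [Fin.prod_univ_succ]
    simp only [Fin.val_zero, if_pos rfl, one_mul]
    have : ∀ i : Fin m, (if ((Fin.succ i : Fin n) : ℕ) = 0 then (1:ℝ) else q⁻¹) = q⁻¹ := by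
      intro i; rw [if_neg (by simp [Fin.val_succ])]
    rw [Finset.prod_congr rfl (fun i _ => this i), Finset.prod_const]
    simp only [Finset.card_univ, Fintype.card_fin]
    rw [show (1 - (n : ℤ)) = -(m : ℤ) by rw [hn']; push_cast; ring]
    rw [zpow_neg, zpow_natCast, inv_pow]
    simp
  calc M.det = M.det * V.det := by rw [hdetV, mul_one]
    _ = (M * V).det := (Matrix.det_mul M V).symm
    _ = L.det := by rw [hMV]
    _ = q ^ (1 - (n : ℤ)) := hdetL
end

section
/- Let 0 < q < 1, ν a nonzero parameter, and define φ_ν^♯(x,y) = ν^{y−x} if y ≥ x, = 1−q if y = x−1, = 0 if y ≤ x−2, for x,y ∈ ℤ, with the convention φ_ν^♯(−∞,y) = ν^y. Let n ≥ 1, integers a_n > … > a_1 with a_0 = −∞, and let f : ℤ^n → ℝ be antisymmetric. Define g_ν(a,b) = 0 if b ≥ a, = ν^b(1−(1−q)ν) if b = a−1, and = ν^b if b ≤ a−2. Then for any fixed b_0, Σ_{b_n>…>b_1>b_0} det(φ_ν^♯(a_i,b_j))_{0≤i,j≤n} · f(b_1,…,b_n) = g_ν(a_1,b_0) · Σ_{b_n>…>b_1>b_0}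 det(φ_ν^♯(a_i,b_j))_{1≤i,j≤n} · f(b_1,…,b_n), whenever both sums converge absolutely. -/
/-- `φ_ν^♯(x,y)`: `ν^{y-x}` if `y ≥ x`, `1-q` if `y = x-1`, `0` if `y ≤ x-2`. -/
noncomputable def phiNu (q ν : ℝ) (x y : ℤ) : ℝ :=
  if x ≤ y then ν ^ (y - x) else if y = x - 1 then 1 - q else 0

/-- `g_ν(a,b)`: `0` if `b ≥ a`, `ν^b (1-(1-q)ν)` if `b = a-1`, `ν^b` if `b ≤ a-2`. -/
noncomputable def gNu (q ν : ℝ) (a b : ℤ) : ℝ :=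
  if a ≤ b then 0 else if b = a - 1 then ν ^ b * (1 - (1 - q) * ν) else ν ^ b

/-- The `(n+1)×(n+1)` matrix with rows indexed by `a_0 = -∞, a_1, …, a_n`
(the `-∞` row having entries `ν^{b_j}`) and columns by `b_0, b_1, …, b_n`,
where `n = m+1`. -/
noncomputable def bigMat (q ν : ℝ) (m : ℕ) (a : Fin (m + 1) → ℤ) (b0 : ℤ)
    (b : Fin (m + 1) → ℤ) : Matrix (Fin (m + 2)) (Fin (m + 2)) ℝ :=
  let B : Fin (m + 2) → ℤ := Fin.cons b0 b
  Matrix.of (Fin.cons (fun j : Fin (m + 2) => ν ^ B j)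
    (fun i : Fin (m + 1) => fun j : Fin (m + 2) => phiNu q ν (a i) (B j)))

lemma rowop (q ν : ℝ) (hν : ν ≠ 0) (x y : ℤ) :
    ν ^ y + (-ν ^ x) * phiNu q ν x y = gNu q ν x y := by
  unfold phiNu gNu
  split_ifs with h1 h2
  · rw [show ν ^ y = ν ^ x * ν ^ (y - x) by rw [← zpow_add₀ hν]; ring_nf]
    ring
  · subst h2
    have : ν ^ x = ν ^ (x - 1) * ν := by
      rw [← zpow_add_one₀ hν, sub_add_cancel]
    rw [this]; ring
  · ring

lemma phiNu_zero (q ν : ℝ) {x y : ℤ} (h : y ≤ x - 2) : phiNu q ν x y = 0 := by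
  unfold phiNu
  rw [if_neg (by omega), if_neg (by omega)]

lemma det_bigMat (q ν : ℝ) (hν : ν ≠ 0) (m : ℕ) (a : Fin (m + 1) → ℤ)
    (ha : StrictMono a) (b0 : ℤ) (b : Fin (m + 1) → ℤ) (hb : StrictMono b)
    (hb0 : b0 < b 0) :
    (bigMat q ν m a b0 b).det
      = gNu q ν (a 0) b0 * (Matrix.of fun i j : Fin (m + 1) => phiNu q ν (a i) (b j)).det := by
  set B : Fin (m + 2) → ℤ := Fin.cons b0 b with hB
  set M : Matrix (Fin (m + 2)) (Fin (m + 2)) ℝ := bigMat q ν m a b0 b with hM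
  have hM0 : ∀ j, M 0 j = ν ^ B j := by
    intro j; simp [hM, bigMat, hB]
  have hMs : ∀ (i : Fin (m + 1)) (j : Fin (m + 2)), M i.succ j = phiNu q ν (a i) (B j) := by
    intro i j; simp [hM, bigMat, hB]
  set M' := M.updateRow 0 (M 0 + (-ν ^ (a 0)) • M 1) with hM'
  have hdet : M.det = M'.det :=
    (Matrix.det_updateRow_add_smul_self M (i := 0) (j := 1) (by simp [Fin.ext_iff]) _).symm
  have hM'0 : ∀ j, M' 0 j = gNu q ν (a 0) (B j) := by
    intro j
    rw [hM', Matrix.updateRow_self]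
    have : M 1 j = phiNu q ν (a 0) (B j) := hMs 0 j
    simp only [Pi.add_apply, Pi.smul_apply, smul_eq_mul, this, hM0]
    exact rowop q ν hν _ _
  have hM's : ∀ (i : Fin (m + 1)) (j : Fin (m + 2)), M' i.succ j = phiNu q ν (a i) (B j) := by
    intro i j
    rw [hM', Matrix.updateRow_ne (Fin.succ_ne_zero i)]
    exact hMs i j
  rw [hdet, Matrix.det_succ_row_zero, Fin.sum_univ_succ]
  have hz : ∀ j : Fin (m + 1),
      (-1 : ℝ) ^ ((j.succ : Fin (m+2)) : ℕ) * M' 0 j.succ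
        * (M'.submatrix Fin.succ (j.succ).succAbove).det = 0 := by
    intro j
    rw [hM'0]
    have hBs : B j.succ = b j := by simp [hB]
    by_cases hle : a 0 ≤ b j
    · rw [hBs]
      have : gNu q ν (a 0) (b j) = 0 := by unfold gNu; rw [if_pos hle]
      rw [this]; ring
    · -- b j ≤ a 0 - 1, and b0 < b 0 ≤ b j, so b0 ≤ a 0 - 2; column of b0 is zero
      have hb0le : b0 ≤ a 0 - 2 := by
        have : b 0 ≤ b j := hb.monotone (Fin.zero_le j)
        omega
      have : (M'.submatrix Fin.succ (j.succ).succAbove).det = 0 := by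
        apply Matrix.det_eq_zero_of_column_eq_zero 0
        intro i
        have h0 : (j.succ).succAbove 0 = 0 := by
          rw [Fin.succAbove_of_castSucc_lt]
          · rfl
          · simp [Fin.lt_def]
        simp only [Matrix.submatrix_apply, h0, hM's]
        have : B (0 : Fin (m + 2)) = b0 := by simp [hB]
        rw [this]
        apply phiNu_zero
        have : a 0 ≤ a i := ha.monotone (Fin.zero_le i)
        omega
      rw [this]; ring
  rw [Finset.sum_eq_zero (fun j _ => hz j), add_zero]
  have hm0 : M' 0 0 = gNu q ν (a 0) b0 := by
    rw [hM'0]; simp [hB]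
  have hminor : M'.submatrix Fin.succ (0 : Fin (m + 2)).succAbove
      = Matrix.of fun i j : Fin (m + 1) => phiNu q ν (a i) (b j) := by
    ext i j
    have h0 : (0 : Fin (m + 2)).succAbove j = j.succ := rfl
    simp only [Matrix.submatrix_apply, h0, hM's, Matrix.of_apply]
    simp [hB]
  rw [hm0, hminor]
  simp

theorem det_f_reduction (q ν : ℝ) (hq0 : 0 < q) (hq1 : q < 1) (hν : ν ≠ 0)
    (m : ℕ) (a : Fin (m + 1) → ℤ) (ha : StrictMono a) (b0 : ℤ)
    (f : (Fin (m + 1) → ℤ) → ℝ)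
    (hf : ∀ (σ : Equiv.Perm (Fin (m + 1))) (b : Fin (m + 1) → ℤ),
      f (b ∘ σ) = (Equiv.Perm.sign σ : ℤ) * f b)
    (hsum1 : Summable fun b : {b : Fin (m + 1) → ℤ // StrictMono b ∧ b0 < b 0} =>
      (bigMat q ν m a b0 b.1).det * f b.1)
    (hsum2 : Summable fun b : {b : Fin (m + 1) → ℤ // StrictMono b ∧ b0 < b 0} =>
      (Matrix.of fun i j : Fin (m + 1) => phiNu q ν (a i) (b.1 j)).det * f b.1) :
    (∑' b : {b : Fin (m + 1) → ℤ // StrictMono b ∧ b0 < b 0},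
      (bigMat q ν m a b0 b.1).det * f b.1)
    = gNu q ν (a 0) b0 *
      ∑' b : {b : Fin (m + 1) → ℤ // StrictMono b ∧ b0 < b 0},
        (Matrix.of fun i j : Fin (m + 1) => phiNu q ν (a i) (b.1 j)).det * f b.1 := by
  rw [← tsum_mul_left]
  apply tsum_congr
  rintro ⟨b, hb, hb0⟩
  rw [det_bigMat q ν hν m a ha b0 b hb hb0]
  ring
end

section
/- Let 0 < q < 1, let w(z,x) be the one-step transition weight of the discrete-time parallel TASEP from ordered configuration z_1 > z_2 > … > z_N to x_1 > x_2 > … > x_N (product over n of v_n, where v_n = 1 if z_n = z_{n−1}−1 and x_n = z_n; v_n = q if z_n < z_{n−1}−1 and x_n = z_n; v_n = 1−q if z_n < z_{n−1}−1 and x_n = z_n+1; with z_0 = +∞), and let w̃(z,x) = ∏_n ṽ_n with ṽ_n = 1 if x_n = x_{n+1}+1 and z_n = x_n; = q if x_n > x_{n+1}+1 and z_n = x_n; = 1−q if x_n > x_{n+1}+1 and z_n = x_n−1 (with x_{N+1} = −∞). Let 𝒩(y_1,…,y_N) denote the number of indices j with y_j − y_{j+1} = 1. Then for all compatible z and x: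 q^{𝒩(z_1,…,z_N)} w(z,x) = q^{𝒩(x_1,…,x_N)} w̃(z,x). -/
open Finset

/-- Weight `v_n` of the one-step parallel TASEP transition from `z` to `x`
(particles indexed `1,…,N`, positions strictly decreasing, `z_0 = +∞`):
`1` if `z_n = z_{n-1}-1` and `x_n = z_n`; `q` if `z_n < z_{n-1}-1` and `x_n = z_n`;
`1-q` if `z_n < z_{n-1}-1` and `x_n = z_n+1`. -/
noncomputable def tasepV (q : ℝ) (z x : ℕ → ℤ) (n : ℕ) : ℝ :=
  if n = 1 then
    (if x n = z n then q else if x n = z n + 1 then 1 - q else 0)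
  else
    if z n = z (n - 1) - 1 ∧ x n = z n then 1
    else if z n < z (n - 1) - 1 ∧ x n = z n then q
    else if z n < z (n - 1) - 1 ∧ x n = z n + 1 then 1 - q
    else 0

/-- Weight `ṽ_n` (with `x_{N+1} = -∞`): `1` if `x_n = x_{n+1}+1` and `z_n = x_n`;
`q` if `x_n > x_{n+1}+1` and `z_n = x_n`; `1-q` if `x_n > x_{n+1}+1` and `z_n = x_n-1`. -/
noncomputable def tasepVt (q : ℝ) (z x : ℕ → ℤ) (N n : ℕ) : ℝ :=
  if n = N then
    (if z n = x n then q else if z n = x n - 1 then 1 - q else 0)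
  else
    if x n = x (n + 1) + 1 ∧ z n = x n then 1
    else if x (n + 1) + 1 < x n ∧ z n = x n then q
    else if x (n + 1) + 1 < x n ∧ z n = x n - 1 then 1 - q
    else 0

/-- `𝒩(y_1,…,y_N)`: the number of indices `1 ≤ j ≤ N-1` with `y_j - y_{j+1} = 1`. -/
def adjCount (y : ℕ → ℤ) (N : ℕ) : ℕ :=
  ((Finset.Icc 1 (N - 1)).filter fun j => y j - y (j + 1) = 1).card

theorem tasep_weight_identity (q : ℝ) (hq0 : 0 < q) (hq1 : q < 1)
    (N : ℕ) (hN : 1 ≤ N) (z x : ℕ → ℤ)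
    (hz : ∀ n, 1 ≤ n → n < N → z (n + 1) < z n)
    (hx : ∀ n, 1 ≤ n → n < N → x (n + 1) < x n)
    (hcompat : ∀ n, 1 ≤ n → n ≤ N → x n = z n ∨ x n = z n + 1)
    (hblocked : ∀ n, 2 ≤ n → n ≤ N → z n = z (n - 1) - 1 → x n = z n) :
    q ^ adjCount z N * ∏ n ∈ Finset.Icc 1 N, tasepV q z x n
      = q ^ adjCount x N * ∏ n ∈ Finset.Icc 1 N, tasepVt q z x N n := by
  -- express the `q` powers as products over `Icc 1 N`
  have pow1 : (q:ℝ) ^ adjCount z N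
      = ∏ n ∈ Finset.Icc 1 N, (if n = 1 then (1:ℝ) else if z n = z (n-1) - 1 then q else 1) := by
    have hsplit : Finset.Icc 1 N = insert 1 (Finset.Icc 2 N) := by
      ext m; simp [Finset.mem_Icc, Finset.mem_insert]; omega
    have himg : Finset.Icc 2 N = Finset.image (· + 1) (Finset.Icc 1 (N-1)) := by
      ext m
      simp only [Finset.mem_Icc, Finset.mem_image]
      constructor
      · rintro ⟨h2, hmN⟩; exact ⟨m-1, ⟨by omega, by omega⟩, by omega⟩
      · rintro ⟨a, ⟨h1, h2⟩, rfl⟩; omega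
    rw [hsplit, Finset.prod_insert (by simp), if_pos rfl, one_mul, himg,
      Finset.prod_image (fun a _ b _ h => by omega)]
    have : ∀ j ∈ Finset.Icc 1 (N-1),
        (if j + 1 = 1 then (1:ℝ) else if z (j+1) = z ((j+1)-1) - 1 then q else 1)
        = if z j - z (j+1) = 1 then q else 1 := by
      intro j hj
      simp only [Finset.mem_Icc] at hj
      rw [if_neg (by omega)]
      simp only [Nat.add_sub_cancel]
      exact if_congr (by omega) rfl rfl
    rw [Finset.prod_congr rfl this, Finset.prod_ite, Finset.prod_const, Finset.prod_const,
      one_pow, mul_one, adjCount]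
  have pow2 : (q:ℝ) ^ adjCount x N
      = ∏ n ∈ Finset.Icc 1 N, (if n = N then (1:ℝ) else if x n = x (n+1) + 1 then q else 1) := by
    have hsplit : Finset.Icc 1 N = insert N (Finset.Icc 1 (N-1)) := by
      ext m; simp [Finset.mem_Icc, Finset.mem_insert]; omega
    rw [hsplit, Finset.prod_insert (by simp [Finset.mem_Icc]; omega), if_pos rfl, one_mul]
    have : ∀ j ∈ Finset.Icc 1 (N-1),
        (if j = N then (1:ℝ) else if x j = x (j+1) + 1 then q else 1)
        = if x j - x (j+1) = 1 then q else 1 := by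
      intro j hj
      simp only [Finset.mem_Icc] at hj
      rw [if_neg (by omega)]
      exact if_congr (by omega) rfl rfl
    rw [Finset.prod_congr rfl this, Finset.prod_ite, Finset.prod_const, Finset.prod_const,
      one_pow, mul_one, adjCount]
  -- pointwise identities
  have key1 : ∀ n ∈ Finset.Icc 1 N,
      (if n = 1 then (1:ℝ) else if z n = z (n-1) - 1 then q else 1) * tasepV q z x n
      = (if x n = z n then q else 1 - q) := by
    intro n hn
    simp only [Finset.mem_Icc] at hn
    obtain ⟨hn1, hnN⟩ := hn
    by_cases h1 : n = 1
    · subst h1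
      rw [if_pos rfl, one_mul, tasepV, if_pos rfl]
      rcases hcompat 1 le_rfl hnN with h | h
      · rw [if_pos h, if_pos h]
      · have hne : x 1 ≠ z 1 := by omega
        rw [if_neg hne, if_pos h, if_neg hne]
    · have h2 : 2 ≤ n := by omega
      have hzdec : z n < z (n-1) := by
        have := hz (n-1) (by omega) (by omega)
        rwa [Nat.sub_add_cancel hn1] at this
      by_cases hadj : z n = z (n-1) - 1
      · have hxz := hblocked n h2 hnN hadj
        rw [if_neg h1, if_pos hadj, tasepV, if_neg h1, if_pos ⟨hadj, hxz⟩, if_pos hxz, mul_one]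
      · have hgap : z n < z (n-1) - 1 := by omega
        rw [if_neg h1, if_neg hadj, one_mul, tasepV, if_neg h1,
          if_neg (fun h => hadj h.1)]
        rcases hcompat n hn1 hnN with h | h
        · rw [if_pos ⟨hgap, h⟩, if_pos h]
        · have hne : x n ≠ z n := by omega
          rw [if_neg (fun hc => hne hc.2), if_pos ⟨hgap, h⟩, if_neg hne]
  have key2 : ∀ n ∈ Finset.Icc 1 N,
      (if n = N then (1:ℝ) else if x n = x (n+1) + 1 then q else 1) * tasepVt q z x N n
      = (if x n = z n then q else 1 - q) := by
    intro n hn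
    simp only [Finset.mem_Icc] at hn
    obtain ⟨hn1, hnN⟩ := hn
    by_cases hNn : n = N
    · subst hNn
      rw [if_pos rfl, one_mul, tasepVt, if_pos rfl]
      rcases hcompat n hn1 le_rfl with h | h
      · rw [if_pos h.symm, if_pos h]
      · have hne : z n ≠ x n := by omega
        rw [if_neg hne, if_pos (by omega), if_neg (by omega)]
    · have hltN : n < N := by omega
      have hxdec : x (n+1) < x n := hx n hn1 hltN
      by_cases hadjx : x n = x (n+1) + 1
      · -- adjacent in x forces no jump at n
        have hzx : z n = x n := by
          rcases hcompat n hn1 hnN with h | h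
          · omega
          · exfalso
            have hzn : z n = x (n+1) := by omega
            rcases hcompat (n+1) (by omega) (by omega) with h' | h'
            · have := hz n hn1 hltN; omega
            · have hb : z (n+1) = z ((n+1)-1) - 1 := by
                simp only [Nat.add_sub_cancel]
                have := hz n hn1 hltN; omega
              have := hblocked (n+1) (by omega) (by omega) hb
              omega
        rw [if_neg hNn, if_pos hadjx, tasepVt, if_neg hNn, if_pos ⟨hadjx, hzx⟩, mul_one,
          if_pos hzx.symm]
      · have hgap : x (n+1) + 1 < x n := by omega
        rw [if_neg hNn, if_neg hadjx, one_mul, tasepVt, if_neg hNn,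
          if_neg (fun h => hadjx h.1)]
        rcases hcompat n hn1 hnN with h | h
        · rw [if_pos ⟨hgap, h.symm⟩, if_pos h]
        · have hne : x n ≠ z n := by omega
          rw [if_neg (fun hc => hne hc.2.symm), if_pos ⟨hgap, by omega⟩, if_neg hne]
  rw [pow1, pow2, ← Finset.prod_mul_distrib, ← Finset.prod_mul_distrib,
    Finset.prod_congr rfl key1, Finset.prod_congr rfl key2]
end
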